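/- Let R be a commutative ring and A an R-algebra. Every R-linear functor F from the category of A-modules to the category of R-modules that is right exact and commutes with arbitrary direct sums is naturally isomorphic to the functor M ↦ F(A) ⊗_A M, where F(A) carries the A-module structure induced by the ring homomorphism A → End_R(F(A)), a ↦ F(a·id). (Eilenberg–Watts theorem, affine case of Lemma A.1.) -/

import Mathlib

open CategoryTheory CategoryTheory.Limits TensorProduct

universe u

section

variable {R : Type u} [CommRing R] {A : Type u} [CommRing A] [Algebra R A]
variable (F : ModuleCat.{u} A ⥤ ModuleCat.{u} R)

/-- The ring homomorphism `A → End_R(F(A))`, `a ↦ F(a · id) = F(mult. by a)`. -/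
noncomputable def ewRingHom [F.Additive] :
    A →+* Module.End R (F.obj (ModuleCat.of A A)) where
  toFun a := ((F.map (ModuleCat.ofHom (Algebra.lmul A A a))).hom :
    F.obj (ModuleCat.of A A) →ₗ[R] F.obj (ModuleCat.of A A))
  map_one' := by
    have h : ModuleCat.ofHom (Algebra.lmul A A 1) = 𝟙 (ModuleCat.of A A) := by
      ext x; simp
    show (F.map (ModuleCat.ofHom (Algebra.lmul A A 1))).hom = _
    rw [h, F.map_id]; rfl
  map_mul' a b := by
    have h : ModuleCat.ofHom (Algebra.lmul A A (a * b)) =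
        ModuleCat.ofHom (Algebra.lmul A A b) ≫ ModuleCat.ofHom (Algebra.lmul A A a) := by
      ext x
      simp [mul_assoc]
    show (F.map (ModuleCat.ofHom (Algebra.lmul A A (a * b)))).hom = _
    rw [h, F.map_comp]; rfl
  map_zero' := by
    have h : ModuleCat.ofHom (Algebra.lmul A A 0) = (0 : ModuleCat.of A A ⟶ ModuleCat.of A A) := by
      have h0 : Algebra.lmul A A (0 : A) = 0 := map_zero _
      rw [h0]; rfl
    show (F.map (ModuleCat.ofHom (Algebra.lmul A A 0))).hom = _
    rw [h, F.map_zero]; try rfl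
  map_add' a b := by
    have h : ModuleCat.ofHom (Algebra.lmul A A (a + b)) =
        ModuleCat.ofHom (Algebra.lmul A A a) + ModuleCat.ofHom (Algebra.lmul A A b) := by
      have h0 : Algebra.lmul A A (a + b) = Algebra.lmul A A a + Algebra.lmul A A b :=
        map_add _ a b
      rw [h0]; rfl
    show (F.map (ModuleCat.ofHom (Algebra.lmul A A (a + b)))).hom = _
    rw [h, F.map_add]; try rfl

/-- The `A`-module structure on `F(A)` induced by `a ↦ F(a · id)`. -/
noncomputable local instance ewModule [F.Additive] :
    Module A (F.obj (ModuleCat.of A A)) :=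
  Module.compHom _ (ewRingHom F)

/-- The `R`-module structure on `F(A) ⊗_A M` by restriction of scalars along `R → A`. -/
noncomputable local instance ewTensorModule [F.Additive] (M : ModuleCat.{u} A) :
    Module R (TensorProduct A (F.obj (ModuleCat.of A A)) M) :=
  Module.compHom _ (algebraMap R A)

section EWAux

variable [F.Additive]

local notation "B" => F.obj (ModuleCat.of A A)

set_option linter.unusedSectionVars false

def ewρ (M : ModuleCat.{u} A) (m : M) : ModuleCat.of A A ⟶ M :=
  ModuleCat.ofHom (LinearMap.toSpanSingleton A M m)

lemma ewρ_add (M : ModuleCat.{u} A) (m m' : M) :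
    ewρ M (m + m') = ewρ M m + ewρ M m' :=
  congrArg ModuleCat.ofHom (LinearMap.ext fun a => smul_add a m m')

lemma ewρ_zero (M : ModuleCat.{u} A) : ewρ M 0 = 0 :=
  congrArg ModuleCat.ofHom (LinearMap.ext fun a => smul_zero a)

lemma ew_smul_def (a : A) (x : F.obj (ModuleCat.of A A)) :
    a • x = F.map (ModuleCat.ofHom (Algebra.lmul A A a)) x := rfl

lemma ew_balanced (M : ModuleCat.{u} A) (a : A) (m : M) :
    ModuleCat.ofHom (Algebra.lmul A A a) ≫ ewρ M m = ewρ M (a • m) := by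
  show ModuleCat.ofHom ((LinearMap.toSpanSingleton A M m) ∘ₗ (Algebra.lmul A A a)) = _
  refine congrArg ModuleCat.ofHom (LinearMap.ext fun b => ?_)
  show (a * b) • m = b • (a • m)
  rw [mul_comm, mul_smul]

lemma ew_smul_rho (M : ModuleCat.{u} A) (r : R) (m : M) :
    (algebraMap R A r) • ewρ M m
      = ModuleCat.ofHom (Algebra.lmul A A (algebraMap R A r)) ≫ ewρ M m := by
  show ModuleCat.ofHom ((algebraMap R A r) • LinearMap.toSpanSingleton A M m)
      = ModuleCat.ofHom ((LinearMap.toSpanSingleton A M m) ∘ₗ (Algebra.lmul A A (algebraMap R A r)))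
  refine congrArg ModuleCat.ofHom (LinearMap.ext fun b => ?_)
  show algebraMap R A r • (b • m) = (algebraMap R A r * b) • m
  rw [mul_smul]

lemma ewρ_comp (M N : ModuleCat.{u} A) (f : M ⟶ N) (m : M) :
    ewρ M m ≫ f = ewρ N (f m) := by
  show ModuleCat.ofHom (f.hom ∘ₗ LinearMap.toSpanSingleton A M m) = _
  refine congrArg ModuleCat.ofHom (LinearMap.ext fun b => ?_)
  show f.hom (b • m) = b • (f m)
  rw [map_smul]

/-- The natural transformation `F(A) ⊗ M → F(M)`. -/
noncomputable def ewτ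
    (hlin : ∀ (r : R) (X Y : ModuleCat.{u} A) (f : X ⟶ Y),
      F.map ((algebraMap R A r) • f) = r • F.map f) (M : ModuleCat.{u} A) :
    (TensorProduct A B M) →ₗ[R] F.obj M where
  toFun := TensorProduct.liftAddHom
    { toFun := fun x => { toFun := fun m => F.map (ewρ M m) x
                          map_zero' := by
                            show F.map (ewρ M 0) x = 0
                            rw [ewρ_zero, F.map_zero]; rfl
                          map_add' := fun m m' => by
                            show F.map (ewρ M (m + m')) x = _
                            rw [ewρ_add, F.map_add]; rfl }
      map_zero' := by ext m; exact map_zero (F.map (ewρ M m)).hom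
      map_add' := fun x y => by ext m; exact map_add (F.map (ewρ M m)).hom x y }
    (fun a x m => by
      show F.map (ewρ M m) (a • x) = F.map (ewρ M (a • m)) x
      rw [ew_smul_def, ← ew_balanced, F.map_comp]
      rfl)
  map_add' := by intros; exact map_add _ _ _
  map_smul' := fun r t => by
    dsimp only [RingHom.id_apply]
    induction t using TensorProduct.induction_on with
    | zero => rw [smul_zero, map_zero, smul_zero]
    | add s t hs ht =>
        rw [smul_add, map_add, map_add, hs, ht, smul_add]
    | tmul x m =>
        have h1 : r • (x ⊗ₜ[A] m : TensorProduct A B M) =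
            ((algebraMap R A r) • x) ⊗ₜ[A] m := by
          show (algebraMap R A r) • (x ⊗ₜ[A] m) = _
          rw [smul_tmul']
        rw [h1]
        show F.map (ewρ M m) ((algebraMap R A r) • x) = r • F.map (ewρ M m) x
        have h2 : F.map (ModuleCat.ofHom (Algebra.lmul A A (algebraMap R A r)) ≫ ewρ M m)
            = r • F.map (ewρ M m) := by
          rw [← ew_smul_rho M r m, hlin]
        have h3 := congrArg (fun (g : F.obj (ModuleCat.of A A) ⟶ F.obj M) => g x) h2
        rw [F.map_comp] at h3
        exact h3

lemma ewτ_tmul (hlin : ∀ (r : R) (X Y : ModuleCat.{u} A) (f : X ⟶ Y),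
      F.map ((algebraMap R A r) • f) = r • F.map f)
    (M : ModuleCat.{u} A) (x : B) (m : M) :
    ewτ F hlin M (x ⊗ₜ[A] m) = F.map (ewρ M m) x := rfl

lemma ewτ_natural (hlin : ∀ (r : R) (X Y : ModuleCat.{u} A) (f : X ⟶ Y),
      F.map ((algebraMap R A r) • f) = r • F.map f)
    {M N : ModuleCat.{u} A} (f : M ⟶ N) (t : TensorProduct A B M) :
    ewτ F hlin N (LinearMap.lTensor B f.hom t) = F.map f (ewτ F hlin M t) := by
  induction t using TensorProduct.induction_on with
  | zero =>
      rw [map_zero, map_zero, map_zero]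
      exact (map_zero (F.map f).hom).symm
  | add s t hs ht =>
      rw [map_add, map_add, hs, ht, map_add]
      exact (map_add (F.map f).hom _ _).symm
  | tmul x m =>
      rw [LinearMap.lTensor_tmul, ewτ_tmul, ewτ_tmul, ← ewρ_comp, F.map_comp]
      rfl


/-- The induced `A`-scalar action via `algebraMap` agrees with the native `R`-action on `F(A)`. -/
lemma ew_smul_compat (hlin : ∀ (r : R) (X Y : ModuleCat.{u} A) (f : X ⟶ Y),
      F.map ((algebraMap R A r) • f) = r • F.map f) (r : R) (x : B) :
    (algebraMap R A r) • x = r • x := by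
  have h1 : ModuleCat.ofHom (Algebra.lmul A A (algebraMap R A r))
      = (algebraMap R A r) • 𝟙 (ModuleCat.of A A) := by
    refine congrArg ModuleCat.ofHom (LinearMap.ext fun b => ?_)
    show algebraMap R A r * b = algebraMap R A r • b
    rw [smul_eq_mul]
  have h2 : F.map (ModuleCat.ofHom (Algebra.lmul A A (algebraMap R A r)))
      = r • 𝟙 (F.obj (ModuleCat.of A A)) := by
    rw [h1, hlin, F.map_id]
  show F.map (ModuleCat.ofHom (Algebra.lmul A A (algebraMap R A r))) x = r • x
  rw [h2]
  rfl

lemma ewρ_self (a : A) :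
    ewρ (ModuleCat.of A A) a = ModuleCat.ofHom (Algebra.lmul A A a) :=
  congrArg ModuleCat.ofHom (LinearMap.ext fun b => (mul_comm (b : A) a))

lemma ewτ_self_tmul (hlin : ∀ (r : R) (X Y : ModuleCat.{u} A) (f : X ⟶ Y),
      F.map ((algebraMap R A r) • f) = r • F.map f) (x : B) (a : A) :
    ewτ F hlin (ModuleCat.of A A) (x ⊗ₜ[A] a) = a • x := by
  rw [ewτ_tmul, ewρ_self]
  rfl

lemma ewτ_self_bijective (hlin : ∀ (r : R) (X Y : ModuleCat.{u} A) (f : X ⟶ Y),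
      F.map ((algebraMap R A r) • f) = r • F.map f) :
    Function.Bijective (ewτ F hlin (ModuleCat.of A A)) := by
  have h : ⇑(ewτ F hlin (ModuleCat.of A A)) = ⇑(TensorProduct.rid A B) := by
    funext t
    induction t using TensorProduct.induction_on with
    | zero => rw [map_zero, map_zero]
    | add s t hs ht => rw [map_add, map_add, hs, ht]
    | tmul x a => rw [ewτ_self_tmul, TensorProduct.rid_tmul]
  rw [h]
  exact (TensorProduct.rid A B).bijective


section Free
open DirectSum

variable (J : Type u) [DecidableEq J]

lemma ewρ_lof (j : J) :
    ewρ (ModuleCat.of A (⨁ _ : J, A)) (DirectSum.lof A J (fun _ => A) j 1)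
      = ModuleCat.ofHom (DirectSum.lof A J (fun _ => A) j) := by
  refine congrArg ModuleCat.ofHom (LinearMap.ext fun b => ?_)
  show (b : A) • (DirectSum.lof A J (fun _ => A) j 1) = DirectSum.lof A J (fun _ => A) j b
  rw [← map_smul, smul_eq_mul, mul_one]

lemma ewτ_free_bijective
    (hlin : ∀ (r : R) (X Y : ModuleCat.{u} A) (f : X ⟶ Y),
      F.map ((algebraMap R A r) • f) = r • F.map f)
    [PreservesColimitsOfShape (Discrete J) F] :
    Function.Bijective (ewτ F hlin (ModuleCat.of A (⨁ _ : J, A))) := by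
  set M : ModuleCat.{u} A := ModuleCat.of A (⨁ _ : J, A) with hM
  set Z : J → ModuleCat.{u} A := fun _ => ModuleCat.of A A with hZ
  -- the colimit cocone over `Discrete.functor Z ⋙ F` with point `⨁ _ : J, B`
  let d : Cocone (Discrete.functor Z ⋙ F) :=
    { pt := ModuleCat.of R (⨁ _ : J, B)
      ι := Discrete.natTrans fun j =>
        (ModuleCat.ofHom (DirectSum.lof R J (fun _ => B) j.as) :
          F.obj (Z j.as) ⟶ ModuleCat.of R (⨁ _ : J, B)) }
  have hd : IsColimit d :=
    { desc := fun s => ModuleCat.ofHom (DirectSum.toModule R J (↑s.pt) fun j =>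
        (s.ι.app ⟨j⟩).hom)
      fac := by
        rintro s ⟨j⟩
        ext x
        show (ModuleCat.ofHom (DirectSum.toModule R J (↑s.pt) fun j =>
            (s.ι.app ⟨j⟩).hom))
              (DirectSum.lof R J (fun _ => B) j x) = s.ι.app ⟨j⟩ x
        exact DirectSum.toModule_lof (ι := J) R (M := fun _ => B) j x
      uniq := by
        rintro s f h
        refine ModuleCat.hom_ext <| DirectSum.linearMap_ext _ fun j => ?_
        ext x
        have h1 := congrArg (fun (g : F.obj (Z j) ⟶ s.pt) => g x) (h ⟨j⟩)
        have h2 : (DirectSum.toModule R J (↑s.pt) fun j =>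
            (s.ι.app ⟨j⟩).hom)
              (DirectSum.lof R J (fun _ => B) j x) = s.ι.app ⟨j⟩ x :=
          DirectSum.toModule_lof (ι := J) R (M := fun _ => B) j x
        exact h1.trans h2.symm }
  let c : Cocone (Discrete.functor Z) := ModuleCat.coproductCocone Z
  have hc' : IsColimit (F.mapCocone c) :=
    isColimitOfPreserves F (ModuleCat.coproductCoconeIsColimit Z)
  let iso := hd.coconePointUniqueUpToIso hc'
  have hbij : Function.Bijective iso.hom := ConcreteCategory.bijective_of_isIso iso.hom
  have hfac : ∀ (j : J) (x : B),
      iso.hom (DirectSum.of (fun _ : J => B) j x)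
        = F.map (ModuleCat.ofHom (DirectSum.lof A J (fun _ => A) j)) x := by
    intro j x
    have h0 := hd.comp_coconePointUniqueUpToIso_hom hc' ⟨j⟩
    exact congrArg (fun (g : F.obj (Z j) ⟶ (F.mapCocone c).pt) => g x) h0
  -- the map θ : ⨁ B → B ⊗ M
  let θ : (⨁ _ : J, B) →ₗ[A] TensorProduct A B M :=
    DirectSum.toModule A J _ fun j =>
      (TensorProduct.mk A B M).flip (DirectSum.lof A J (fun _ => A) j 1)
  have hθ_lof : ∀ (j : J) (x : B),
      θ (DirectSum.of (fun _ : J => B) j x)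
        = x ⊗ₜ[A] (DirectSum.lof A J (fun _ => A) j 1) :=
    fun j x => DirectSum.toModule_lof (ι := J) A (M := fun _ => B) j x
  -- θ is bijective, being (inverse of) the standard direct sum/tensor equivalence
  let e1 := TensorProduct.directSumRight A A B (fun _ : J => A)
  let e2 := DFinsupp.mapRange.linearEquiv (fun _ : J => TensorProduct.rid A B)
  have hθbij : Function.Bijective θ := by
    have h : (θ : (⨁ _ : J, B) →ₗ[A] TensorProduct A B M) = (e1 ≪≫ₗ e2).symm.toLinearMap := by
      refine DirectSum.linearMap_ext _ fun j => ?_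
      ext x
      show θ (DirectSum.lof A J (fun _ => B) j x)
        = (e1 ≪≫ₗ e2).symm (DirectSum.lof A J (fun _ => B) j x)
      rw [DirectSum.lof_eq_of, hθ_lof]
      have key : (e1 ≪≫ₗ e2) (x ⊗ₜ[A] DirectSum.lof A J (fun _ => A) j 1)
          = DirectSum.of (fun _ : J => B) j x := by
        show e2 (e1 (x ⊗ₜ[A] DirectSum.lof A J (fun _ => A) j 1)) = _
        rw [TensorProduct.directSumRight_tmul_lof]
        show DFinsupp.mapRange (fun _ y => TensorProduct.rid A B y) (fun _ => map_zero _)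
            (DFinsupp.single j (x ⊗ₜ[A] 1)) = DFinsupp.single j x
        rw [DFinsupp.mapRange_single, TensorProduct.rid_tmul, one_smul]
      exact (((e1 ≪≫ₗ e2).symm_apply_eq).mpr key.symm).symm
    rw [h]
    exact (e1 ≪≫ₗ e2).symm.bijective
  -- τ ∘ θ = iso.hom
  have hcomp : ∀ z, ewτ F hlin M (θ z) = iso.hom z := by
    intro z
    induction z using DirectSum.induction_on with
    | zero => rw [map_zero, map_zero]; exact (map_zero iso.hom.hom).symm
    | of j x =>
        rw [hθ_lof, ewτ_tmul, ewρ_lof, hfac]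
    | add z w hz hw =>
        rw [map_add, map_add, hz, hw]
        exact (map_add iso.hom.hom _ _).symm
  constructor
  · intro t t' htt
    obtain ⟨z, rfl⟩ := hθbij.surjective t
    obtain ⟨z', rfl⟩ := hθbij.surjective t'
    rw [hcomp, hcomp] at htt
    rw [hbij.injective htt]
  · intro y
    obtain ⟨z, hz⟩ := hbij.surjective y
    exact ⟨θ z, by rw [hcomp, hz]⟩

end Free


section General
open DirectSum

lemma ewτ_bijective
    (hlin : ∀ (r : R) (X Y : ModuleCat.{u} A) (f : X ⟶ Y),
      F.map ((algebraMap R A r) • f) = r • F.map f)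
    [PreservesFiniteColimits F]
    [∀ J : Type u, PreservesColimitsOfShape (Discrete J) F]
    (M : ModuleCat.{u} A) :
    Function.Bijective (ewτ F hlin M) := by
  classical
  -- a free presentation of M
  set F0 : ModuleCat.{u} A := ModuleCat.of A (⨁ _ : (M : Type u), A) with hF0
  let p : F0 ⟶ M :=
    ModuleCat.ofHom (DirectSum.toModule A (M : Type u) M fun m => LinearMap.toSpanSingleton A M m)
  have hp : Function.Surjective p := by
    intro m
    refine ⟨DirectSum.lof A (M : Type u) (fun _ => A) m 1, ?_⟩
    have h := DirectSum.toModule_lof (ι := (M : Type u)) A (M := fun _ => A)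
      (φ := fun m => LinearMap.toSpanSingleton A M m) m 1
    exact h.trans (one_smul A m)
  set K := LinearMap.ker p.hom with hK
  set F1 : ModuleCat.{u} A := ModuleCat.of A (⨁ _ : (K : Type u), A) with hF1
  let g0 : F1 →ₗ[A] K :=
    DirectSum.toModule A (K : Type u) K fun k => LinearMap.toSpanSingleton A K k
  have hg0 : Function.Surjective g0 := by
    intro k
    refine ⟨DirectSum.lof A (K : Type u) (fun _ => A) k 1, ?_⟩
    have h := DirectSum.toModule_lof (ι := (K : Type u)) A (M := fun _ => A)
      (φ := fun k => LinearMap.toSpanSingleton A K k) k 1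
    exact h.trans (one_smul A k)
  let g : F1 ⟶ F0 := ModuleCat.ofHom (K.subtype ∘ₗ g0)
  have hgp : ∀ x, p (g x) = 0 := fun x => (g0 x).2
  have hzero : g ≫ p = (0 : F1 ⟶ M) := by
    refine ModuleCat.hom_ext (LinearMap.ext fun x => ?_)
    simpa using hgp x
  have hexact : Function.Exact g.hom p.hom := by
    intro y
    constructor
    · intro hy
      obtain ⟨k, hk⟩ := hg0 ⟨y, hy⟩
      exact ⟨k, congrArg Subtype.val hk⟩
    · rintro ⟨x, rfl⟩
      exact hgp x
  -- exactness of the bottom row via right exactness of F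
  let S : ShortComplex (ModuleCat.{u} A) := ShortComplex.mk g p hzero
  have hSexact : S.Exact :=
    (ShortComplex.moduleCat_exact_iff S).mpr fun y hy => (hexact y).mp hy
  have hepi : Epi S.g := (ModuleCat.epi_iff_surjective (p : F0 ⟶ M)).mpr hp
  have htfae := (Functor.preservesFiniteColimits_tfae F).out 3 1
  have hmap := htfae.mp ‹PreservesFiniteColimits F› S ⟨hSexact, hepi⟩
  have hFexact : Function.Exact (F.map g).hom
      (F.map p).hom := by
    intro y
    constructor
    · intro hy
      exact (ShortComplex.moduleCat_exact_iff (S.map F)).mp hmap.1 y hy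
    · rintro ⟨x, rfl⟩
      have h : F.map g ≫ F.map p = (0 : F.obj F1 ⟶ F.obj M) := by
        rw [← F.map_comp, hzero, F.map_zero]
      exact congrArg (fun (q : F.obj F1 ⟶ F.obj M) => q x) h
  have hFp : Function.Surjective (F.map p) := by
    have : Epi (F.map p) := hmap.2
    exact (ModuleCat.epi_iff_surjective (F.map p)).mp this
  -- exactness of the top row via right exactness of the tensor product
  have hTp : Function.Surjective (LinearMap.lTensor B p.hom) :=
    LinearMap.lTensor_surjective B hp
  have hTexact : Function.Exact (LinearMap.lTensor B g.hom)
      (LinearMap.lTensor B p.hom) :=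
    lTensor_exact B hexact hp
  -- the comparison maps for the free modules are bijective
  have h0 : Function.Bijective (ewτ F hlin F0) := ewτ_free_bijective F (M : Type u) hlin
  have h1 : Function.Bijective (ewτ F hlin F1) := ewτ_free_bijective F (K : Type u) hlin
  constructor
  · -- injectivity
    have hker : ∀ t, ewτ F hlin M t = 0 → t = 0 := by
      intro t ht
      obtain ⟨w, rfl⟩ := hTp t
      have h2 : F.map p (ewτ F hlin F0 w) = 0 := by
        rw [← ewτ_natural F hlin p w, ht]
      obtain ⟨v, hv⟩ := (hFexact _).mp h2
      obtain ⟨u, rfl⟩ := h1.surjective v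
      have h3 : ewτ F hlin F0 (LinearMap.lTensor B g.hom u) = ewτ F hlin F0 w := by
        rw [ewτ_natural F hlin g u]
        exact hv
      have h4 := h0.injective h3
      rw [← h4, ← LinearMap.lTensor_comp_apply]
      have h5 : p.hom ∘ₗ g.hom = 0 := LinearMap.ext hgp
      rw [h5, LinearMap.lTensor_zero, LinearMap.zero_apply]
    intro t t' htt
    have h6 : ewτ F hlin M (t - t') = 0 := by rw [map_sub, htt, sub_self]
    exact sub_eq_zero.mp (hker _ h6)
  · -- surjectivity
    intro y
    obtain ⟨z, hz⟩ := hFp y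
    obtain ⟨w, hw⟩ := h0.surjective z
    exact ⟨LinearMap.lTensor B p.hom w, by rw [ewτ_natural F hlin p w, hw, hz]⟩

end General

end EWAux

/-- Eilenberg–Watts: every `R`-linear, right exact functor `F : Mod_A ⥤ Mod_R` commuting
with arbitrary direct sums is naturally isomorphic to `M ↦ F(A) ⊗_A M`, where `F(A)` has
the `A`-module structure induced by `a ↦ F(a · id)`. -/
theorem eilenberg_watts [F.Additive]
    (hlin : ∀ (r : R) (X Y : ModuleCat.{u} A) (f : X ⟶ Y),
      F.map ((algebraMap R A r) • f) = r • F.map f)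
    [PreservesFiniteColimits F]
    [∀ J : Type u, PreservesColimitsOfShape (Discrete J) F] :
    ∃ e : ∀ M : ModuleCat.{u} A,
        (TensorProduct A (F.obj (ModuleCat.of A A)) M) ≃ₗ[R] F.obj M,
      ∀ (M N : ModuleCat.{u} A) (f : M ⟶ N)
        (x : TensorProduct A (F.obj (ModuleCat.of A A)) M),
        e N (LinearMap.lTensor (F.obj (ModuleCat.of A A)) f.hom x) =
          F.map f (e M x) := by
  refine ⟨fun M => LinearEquiv.ofBijective (ewτ F hlin M) (ewτ_bijective F hlin M), ?_⟩
  intro M N f x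
  exact ewτ_natural F hlin f x

end
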